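/- (Global rephasing channel.) Fix q ∈ [-1,1] and define the 8 two-qubit Kraus operators K_{1,±} = √((1±q)/2)·|Φ±⟩⟨00|, K_{2,±} = √((1±q)/2)·|Ψ±⟩⟨01|, K_{3,±} = √((1±q)/2)·|Ψ±⟩⟨10|, K_{4,±} = √((1±q)/2)·|Φ±⟩⟨11|, where |Φ±⟩ = (|00⟩ ± |11⟩)/√2 and |Ψ±⟩ = (|01⟩ ± |10⟩)/√2 are the Bell states. Then (1) ∑_{i,±} K_{i,±}† K_{i,±} = I4, so Λ^q_{GR3}(X) = ∑_{i,±} K_{i,±} X K_{i,±}† is a CPTP map; and (2) for every two-qubit density matrix ρ, Λ^q_{GR3}(ρ) = ρ(q, -q·T33, T33), the Bell-diagonal state on the phase-flip freezing surface with T33 = Tr[(σ3⊗σ3)·ρ]. In particular, Λ^q_{GR3}(ρ(c1, -c1·c3, c3)) = ρ(q, -q·c3, c3) for all c1, c3 ∈ [-1,1]. -/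

import Mathlib

open Matrix Kronecker
open scoped ComplexOrder

noncomputable section

/-- 2×2 complex matrices (single-qubit operators). -/
abbrev Mat2 := Matrix (Fin 2) (Fin 2) ℂ

/-- 4×4 complex matrices (two-qubit operators), indexed by `Fin 2 × Fin 2`. -/
abbrev Mat4 := Matrix (Fin 2 × Fin 2) (Fin 2 × Fin 2) ℂ

/-- Pauli matrix σ₁ (x). -/
def σ1 : Mat2 := !![0, 1; 1, 0]

/-- Pauli matrix σ₂ (y). -/
def σ2 : Mat2 := !![0, -Complex.I; Complex.I, 0]

/-- Pauli matrix σ₃ (z). -/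
def σ3 : Mat2 := !![1, 0; 0, -1]

/-- The Bell-diagonal state ρ(c1,c2,c3) = (1/4)(I₄ + c1 σ₁⊗σ₁ + c2 σ₂⊗σ₂ + c3 σ₃⊗σ₃). -/
def BD (c1 c2 c3 : ℝ) : Mat4 :=
  (1 / 4 : ℂ) • ((1 : Mat4) + (c1 : ℂ) • (σ1 ⊗ₖ σ1) + (c2 : ℂ) • (σ2 ⊗ₖ σ2)
    + (c3 : ℂ) • (σ3 ⊗ₖ σ3))

/-- A two-qubit density matrix: positive semidefinite with unit trace. -/
def IsDensityMatrix (ρ : Mat4) : Prop := ρ.PosSemidef ∧ ρ.trace = 1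

/-- A CPTP map given by finitely many Kraus operators. -/
def IsCPTP (Λ : Mat4 → Mat4) : Prop :=
  ∃ (n : ℕ) (K : Fin n → Mat4),
    (∑ i, (K i)ᴴ * K i) = 1 ∧ ∀ X, Λ X = ∑ i, K i * X * (K i)ᴴ

/-- A distance `D` is contractive if it contracts under every CPTP map. -/
def Contractive (D : Mat4 → Mat4 → ℝ) : Prop :=
  ∀ Λ : Mat4 → Mat4, IsCPTP Λ → ∀ ρ σ : Mat4,
    IsDensityMatrix ρ → IsDensityMatrix σ → D (Λ ρ) (Λ σ) ≤ D ρ σ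

/-- A distance `D` is invariant under transposition. -/
def TransposeInvariant (D : Mat4 → Mat4 → ℝ) : Prop :=
  ∀ ρ σ : Mat4, IsDensityMatrix ρ → IsDensityMatrix σ → D ρᵀ σᵀ = D ρ σ

/-- A distance `D` is jointly convex. -/
def JointlyConvex (D : Mat4 → Mat4 → ℝ) : Prop :=
  ∀ q : ℝ, 0 ≤ q → q ≤ 1 → ∀ ρ σ τ ς : Mat4,
    IsDensityMatrix ρ → IsDensityMatrix σ → IsDensityMatrix τ → IsDensityMatrix ς →
    D (q • ρ + (1 - q) • σ) (q • τ + (1 - q) • ς) ≤ q * D ρ τ + (1 - q) * D σ ς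

/-- A classical-classical two-qubit state: ∑ᵢⱼ pᵢⱼ |aᵢ⟩⟨aᵢ| ⊗ |bⱼ⟩⟨bⱼ| with (pᵢⱼ) a
probability distribution and {aᵢ}, {bⱼ} orthonormal bases of ℂ². -/
def IsClassical (χ : Mat4) : Prop :=
  ∃ (p : Fin 2 → Fin 2 → ℝ) (a b : Fin 2 → Fin 2 → ℂ),
    (∀ i j, 0 ≤ p i j) ∧ (∑ i, ∑ j, p i j = 1) ∧
    (∀ i i', ∑ k, (starRingEnd ℂ) (a i k) * a i' k = if i = i' then 1 else 0) ∧
    (∀ j j', ∑ k, (starRingEnd ℂ) (b j k) * b j' k = if j = j' then 1 else 0) ∧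
    χ = ∑ i, ∑ j, (p i j : ℂ) •
      (Matrix.vecMulVec (a i) (star (a i)) ⊗ₖ Matrix.vecMulVec (b j) (star (b j)))

/-- Membership in the tetrahedron of Bell-diagonal states. -/
def InTetra (c : ℝ × ℝ × ℝ) : Prop :=
  c ∈ convexHull ℝ
    ({((1 : ℝ), (-1 : ℝ), (1 : ℝ)), ((-1 : ℝ), (1 : ℝ), (1 : ℝ)),
      ((1 : ℝ), (1 : ℝ), (-1 : ℝ)), ((-1 : ℝ), (-1 : ℝ), (-1 : ℝ))} : Set (ℝ × ℝ × ℝ))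

/-- Geometric discord: distance to the set of classical states. -/
def QD (D : Mat4 → Mat4 → ℝ) (ρ : Mat4) : ℝ :=
  sInf {x : ℝ | ∃ χ : Mat4, IsClassical χ ∧ x = D ρ χ}

/-- The Pauli matrices, indexed. -/
def pauli : Fin 3 → Mat2 := ![σ1, σ2, σ3]

/-- Computational basis vector |ij⟩ of ℂ²⊗ℂ². -/
def e (i j : Fin 2) : Fin 2 × Fin 2 → ℂ := fun x => if x = (i, j) then 1 else 0

/-- Sign ±1 (complex), indexed by `Fin 2` (0 ↦ +, 1 ↦ −). -/
def sgnC : Fin 2 → ℂ := ![1, -1]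

/-- Sign ±1 (real), indexed by `Fin 2` (0 ↦ +, 1 ↦ −). -/
def sgnR : Fin 2 → ℝ := ![1, -1]

/-- The Bell states used by the Kraus operators of the global rephasing channel:
Φ± for i = 0, 3 and Ψ± for i = 1, 2. -/
def bellvec (i : Fin 4) (ε : Fin 2) : Fin 2 × Fin 2 → ℂ :=
  (((Real.sqrt 2)⁻¹ : ℝ) : ℂ) •
    (![e 0 0 + sgnC ε • e 1 1, e 0 1 + sgnC ε • e 1 0,
       e 0 1 + sgnC ε • e 1 0, e 0 0 + sgnC ε • e 1 1] i)

/-- The computational basis vectors |00⟩, |01⟩, |10⟩, |11⟩. -/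
def basevec : Fin 4 → (Fin 2 × Fin 2 → ℂ) := ![e 0 0, e 0 1, e 1 0, e 1 1]

/-- The Kraus operators K_{i,±} = √((1±q)/2)·|Bell⟩⟨base| of the global rephasing
channel Λ^q_{GR3}. -/
def grK (q : ℝ) (i : Fin 4) (ε : Fin 2) : Mat4 :=
  ((Real.sqrt ((1 + sgnR ε * q) / 2) : ℝ) : ℂ) •
    Matrix.vecMulVec (bellvec i ε) (star (basevec i))

/-- The global rephasing channel Λ^q_{GR3}. -/
def GR (q : ℝ) (X : Mat4) : Mat4 :=
  ∑ i : Fin 4, ∑ ε : Fin 2, grK q i ε * X * (grK q i ε)ᴴ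

/-- The correlation function T₃₃ = Tr[(σ₃⊗σ₃)ρ]. -/
def T33 (ρ : Mat4) : ℝ := (((σ3 ⊗ₖ σ3) * ρ).trace).re

/-!
Each Kraus pair `K_{i,±}` reads off the diagonal entry `ρ_ii` in the computational basis and
writes it onto the two Bell projectors `|B_{i,±}⟩⟨B_{i,±}|` with weights `(1 ± q)/2`. The four Bell
projectors are the Bell-diagonal states `ρ(±1, ∓σ, σ)` with `σ = +1` for `Φ±` and `σ = -1` for `Ψ±`,
and `ρ(c)` is affine in `c`. So for a Hermitian `ρ` of unit trace the output is the affine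
combination `ρ(q, -q·T₃₃, T₃₃)` with `T₃₃ = ρ₀₀ - ρ₀₁ - ρ₁₀ + ρ₁₁`.
-/

lemma vecMulVec_mul_mul_vecMulVec {ι R : Type*} [Fintype ι] [CommSemiring R]
    (u v w x : ι → R) (X : Matrix ι ι R) :
    vecMulVec u v * X * vecMulVec w x = ((v ᵥ* X) ⬝ᵥ w) • vecMulVec u x := by
  rw [vecMulVec_mul, vecMulVec_mul_vecMulVec, vecMulVec_smul]

lemma ofReal_sqrt_mul_self {x : ℝ} (hx : 0 ≤ x) : (Real.sqrt x : ℂ) * Real.sqrt x = x := by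
  rw [← Complex.ofReal_mul, Real.mul_self_sqrt hx]

lemma isCPTP_of_kraus {ι : Type*} [Fintype ι] {Λ : Mat4 → Mat4} (K : ι → Mat4)
    (hK : ∑ i, (K i)ᴴ * K i = 1) (hΛ : ∀ X, Λ X = ∑ i, K i * X * (K i)ᴴ) : IsCPTP Λ := by
  let f := Fintype.equivFin ι
  refine ⟨Fintype.card ι, K ∘ f.symm, ?_, fun X => ?_⟩
  · exact (f.symm.sum_comp fun i => (K i)ᴴ * K i).trans hK
  · exact (hΛ X).trans (f.symm.sum_comp fun i => K i * X * (K i)ᴴ).symm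

lemma isHermitian_BD (c1 c2 c3 : ℝ) : (BD c1 c2 c3).IsHermitian := by
  have h1 : σ1ᴴ = σ1 := by ext i j; fin_cases i <;> fin_cases j <;> simp [σ1]
  have h2 : σ2ᴴ = σ2 := by ext i j; fin_cases i <;> fin_cases j <;> simp [σ2]
  have h3 : σ3ᴴ = σ3 := by ext i j; fin_cases i <;> fin_cases j <;> simp [σ3]
  simp [IsHermitian, BD, conjTranspose_kronecker, h1, h2, h3]

lemma trace_BD (c1 c2 c3 : ℝ) : (BD c1 c2 c3).trace = 1 := by
  simp [BD, σ1, σ2, σ3, Matrix.trace, Fintype.sum_prod_type, kroneckerMap_apply]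
  ring

lemma T33_BD (c1 c2 c3 : ℝ) : T33 (BD c1 c2 c3) = c3 := by
  simp [T33, BD, σ1, σ2, σ3, Matrix.trace, Fintype.sum_prod_type, kroneckerMap_apply,
    Matrix.mul_apply]
  ring

lemma BD_sum {ι : Type*} (s : Finset ι) (a c1 c2 c3 : ι → ℝ) (ha : ∑ i ∈ s, a i = 1) :
    ∑ i ∈ s, (a i : ℂ) • BD (c1 i) (c2 i) (c3 i)
      = BD (∑ i ∈ s, a i * c1 i) (∑ i ∈ s, a i * c2 i) (∑ i ∈ s, a i * c3 i) := by
  have ha' : ∑ i ∈ s, (a i : ℂ) = 1 := by exact_mod_cast ha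
  simp only [BD, smul_add, smul_smul, Finset.sum_add_distrib, ← Finset.sum_smul,
    mul_left_comm (a _ : ℂ) (1 / 4), mul_comm (a _ : ℂ) (1 / 4), ← Finset.mul_sum, ha', mul_one,
    Complex.ofReal_sum, Complex.ofReal_mul]

/-- The eigenvalue of `σ₃ ⊗ σ₃` on `basevec i`. -/
def zzSign : Fin 4 → ℝ := ![1, -1, -1, 1]

def baseIdx : Fin 4 → Fin 2 × Fin 2 := ![(0, 0), (0, 1), (1, 0), (1, 1)]

lemma inv_ofReal_sqrt_two_mul_self : ((Real.sqrt 2 : ℂ))⁻¹ * (Real.sqrt 2 : ℂ)⁻¹ = 2⁻¹ := by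
  rw [← mul_inv, ofReal_sqrt_mul_self zero_le_two, Complex.ofReal_ofNat]

lemma vecMulVec_bellvec (i : Fin 4) (ε : Fin 2) :
    vecMulVec (bellvec i ε) (star (bellvec i ε))
      = BD (sgnR ε) (-(sgnR ε * zzSign i)) (zzSign i) := by
  ext ⟨a, b⟩ ⟨c, d⟩
  fin_cases i <;> fin_cases ε <;> fin_cases a <;> fin_cases b <;> fin_cases c <;> fin_cases d <;>
    simp [bellvec, BD, e, sgnC, sgnR, zzSign, σ1, σ2, σ3, vecMulVec_apply, one_apply,
      inv_ofReal_sqrt_two_mul_self] <;> norm_num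

lemma dotProduct_bellvec_self (i : Fin 4) (ε : Fin 2) :
    star (bellvec i ε) ⬝ᵥ bellvec i ε = 1 := by
  rw [dotProduct_comm, ← trace_vecMulVec, vecMulVec_bellvec, trace_BD]

lemma basevec_eq_single (i : Fin 4) : basevec i = Pi.single (baseIdx i) 1 := by
  fin_cases i <;> ext x <;> simp [basevec, baseIdx, e, Pi.single_apply]

lemma star_basevec (i : Fin 4) : star (basevec i) = basevec i := by
  rw [basevec_eq_single, ← Pi.single_star, star_one]

lemma basevec_vecMul_dotProduct (X : Mat4) (i : Fin 4) :
    (basevec i ᵥ* X) ⬝ᵥ basevec i = X (baseIdx i) (baseIdx i) := by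
  rw [basevec_eq_single, single_one_vecMul, dotProduct_single_one, row_apply]

lemma sum_vecMulVec_basevec : ∑ i, vecMulVec (basevec i) (basevec i) = (1 : Mat4) := by
  ext ⟨a, b⟩ ⟨c, d⟩
  fin_cases a <;> fin_cases b <;> fin_cases c <;> fin_cases d <;>
    simp [basevec_eq_single, baseIdx, Fin.sum_univ_four, vecMulVec_apply, Matrix.sum_apply,
      one_apply, Pi.single_apply]

lemma trace_eq_sum_baseIdx (X : Mat4) : X.trace = ∑ i, X (baseIdx i) (baseIdx i) := by
  simp [Matrix.trace, Fintype.sum_prod_type, Fin.sum_univ_four, baseIdx]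
  ring

lemma T33_eq_sum_baseIdx (X : Mat4) :
    T33 X = ∑ i, (X (baseIdx i) (baseIdx i)).re * zzSign i := by
  simp [T33, Matrix.trace, Matrix.mul_apply, Fintype.sum_prod_type, Fin.sum_univ_four, baseIdx,
    zzSign, σ3, kroneckerMap_apply]
  ring

lemma krausWeight_nonneg {q : ℝ} (hq : q ∈ Set.Icc (-1 : ℝ) 1) (ε : Fin 2) :
    0 ≤ (1 + sgnR ε * q) / 2 := by
  fin_cases ε <;> simp [sgnR] <;> linarith [hq.1, hq.2]

lemma conjTranspose_grK_mul_grK {q : ℝ} (hq : q ∈ Set.Icc (-1 : ℝ) 1) (i : Fin 4) (ε : Fin 2) :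
    (grK q i ε)ᴴ * grK q i ε
      = (((1 + sgnR ε * q) / 2 : ℝ) : ℂ) • vecMulVec (basevec i) (basevec i) := by
  simp only [grK, conjTranspose_smul, conjTranspose_vecMulVec, star_basevec, Complex.star_def,
    Complex.conj_ofReal, smul_mul_smul, vecMulVec_mul_vecMulVec, dotProduct_bellvec_self,
    one_smul, ofReal_sqrt_mul_self (krausWeight_nonneg hq ε)]

lemma sum_conjTranspose_grK_mul_grK {q : ℝ} (hq : q ∈ Set.Icc (-1 : ℝ) 1) :
    ∑ i : Fin 4, ∑ ε : Fin 2, (grK q i ε)ᴴ * grK q i ε = 1 := by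
  have hw : ∑ ε : Fin 2, (((1 + sgnR ε * q) / 2 : ℝ) : ℂ) = 1 := by
    simp [Fin.sum_univ_two, sgnR]; ring
  simp only [conjTranspose_grK_mul_grK hq, ← Finset.sum_smul, hw, one_smul,
    sum_vecMulVec_basevec]

lemma grK_mul_mul_conjTranspose_grK {q : ℝ} (hq : q ∈ Set.Icc (-1 : ℝ) 1) (i : Fin 4)
    (ε : Fin 2) (X : Mat4) :
    grK q i ε * X * (grK q i ε)ᴴ
      = ((((1 + sgnR ε * q) / 2 : ℝ) : ℂ) * X (baseIdx i) (baseIdx i)) •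
        BD (sgnR ε) (-(sgnR ε * zzSign i)) (zzSign i) := by
  simp only [grK, conjTranspose_smul, conjTranspose_vecMulVec, star_basevec, Complex.star_def,
    Complex.conj_ofReal, Matrix.smul_mul, Matrix.mul_smul, smul_smul]
  rw [vecMulVec_mul_mul_vecMulVec, basevec_vecMul_dotProduct, vecMulVec_bellvec, smul_smul,
    ofReal_sqrt_mul_self (krausWeight_nonneg hq ε)]

lemma GR_eq_sum {q : ℝ} (hq : q ∈ Set.Icc (-1 : ℝ) 1) (X : Mat4) :
    GR q X = ∑ i, X (baseIdx i) (baseIdx i) • BD q (-(q * zzSign i)) (zzSign i) := by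
  refine Finset.sum_congr rfl fun i _ => ?_
  have hw : ∑ ε : Fin 2, (1 + sgnR ε * q) / 2 = 1 := by simp [Fin.sum_univ_two, sgnR]; ring
  simp only [grK_mul_mul_conjTranspose_grK hq, mul_comm _ (X _ _), ← smul_smul,
    ← Finset.smul_sum, BD_sum _ _ _ _ _ hw]
  congr 2 <;> simp [Fin.sum_univ_two, sgnR] <;> ring

lemma GR_eq_BD_of_isHermitian {q : ℝ} (hq : q ∈ Set.Icc (-1 : ℝ) 1) {X : Mat4}
    (hX : X.IsHermitian) (htr : X.trace = 1) :
    GR q X = BD q (-(q * T33 X)) (T33 X) := by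
  have hdiag : ∑ i, (X (baseIdx i) (baseIdx i)).re = 1 := by
    rw [← Complex.re_sum, ← trace_eq_sum_baseIdx, htr, Complex.one_re]
  calc GR q X
      = ∑ i, ((X (baseIdx i) (baseIdx i)).re : ℂ) • BD q (-(q * zzSign i)) (zzSign i) := by
        simp only [GR_eq_sum hq, fun k => Complex.conj_eq_iff_re.mp (hX.apply k k)]
    _ = _ := BD_sum _ _ _ _ _ hdiag
    _ = BD q (-(q * T33 X)) (T33 X) := by
        simp only [T33_eq_sum_baseIdx, ← Finset.sum_mul, hdiag, one_mul]
        congr 1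
        rw [Finset.mul_sum, ← Finset.sum_neg_distrib]
        exact Finset.sum_congr rfl fun i _ => by ring

/-- Global rephasing channel: the K_{i,±} form a valid Kraus decomposition,
Λ^q_{GR3} is CPTP, it maps every density matrix onto the phase-flip freezing surface,
and in particular Λ^q_{GR3}(ρ(c1,-c1·c3,c3)) = ρ(q,-q·c3,c3). -/
theorem global_rephasing_channel (q : ℝ) (hq : q ∈ Set.Icc (-1 : ℝ) 1) :
    (∑ i : Fin 4, ∑ ε : Fin 2, (grK q i ε)ᴴ * grK q i ε = 1) ∧
    IsCPTP (GR q) ∧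
    (∀ ρ : Mat4, IsDensityMatrix ρ → GR q ρ = BD q (-(q * T33 ρ)) (T33 ρ)) ∧
    (∀ c1 c3 : ℝ, c1 ∈ Set.Icc (-1 : ℝ) 1 → c3 ∈ Set.Icc (-1 : ℝ) 1 →
      GR q (BD c1 (-(c1 * c3)) c3) = BD q (-(q * c3)) c3) := by
  have hKraus := sum_conjTranspose_grK_mul_grK hq
  refine ⟨hKraus, ?_, fun ρ hρ => GR_eq_BD_of_isHermitian hq hρ.1.1 hρ.2, fun c1 c3 _ _ => ?_⟩
  · refine isCPTP_of_kraus (fun p : Fin 4 × Fin 2 => grK q p.1 p.2) ?_ fun X => ?_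
    · rwa [Fintype.sum_prod_type]
    · rw [Fintype.sum_prod_type, GR]
  · simpa only [T33_BD] using GR_eq_BD_of_isHermitian hq (isHermitian_BD _ _ _) (trace_BD _ _ _)
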